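/- For all integers k ≥ 0 and all integers i with k+1 ≤ i ≤ 2k+1, the alternating sum ∑_{j=0}^{i−k−1} (−1)^j C(k−j, 2k+1−i)·C(2k+1, k−j) is nonnegative. (This follows because the sequence a_j = C(k−j, 2k+1−i)·C(2k+1, k−j), 0 ≤ j ≤ i−k−1, is decreasing: a_j/a_{j+1} = (k+2+j)/(i−k−1−j) > 1 whenever a_{j+1} ≠ 0.) -/

import Mathlib

/-- Partial alternating sum of binomial coefficients (reversed form):
`∑_{j=0}^{t} (-1)^j C(m+1, t-j) = C(m, t)`. -/
lemma aux_alt_sum (m t : ℕ) :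
    ∑ j ∈ Finset.range (t + 1), (-1 : ℤ) ^ j * ((m + 1).choose (t - j) : ℤ)
      = (m.choose t : ℤ) := by
  induction t with
  | zero => simp
  | succ t ih =>
    rw [Finset.sum_range_succ']
    have : ∀ j ∈ Finset.range (t + 1),
        (-1 : ℤ) ^ (j + 1) * ((m + 1).choose (t + 1 - (j + 1)) : ℤ)
          = -((-1 : ℤ) ^ j * ((m + 1).choose (t - j) : ℤ)) := by
      intro j hj
      have : t + 1 - (j + 1) = t - j := by omega
      rw [this, pow_succ]
      ring
    rw [Finset.sum_congr rfl this, Finset.sum_neg_distrib, ih]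
    have : (m + 1).choose (t + 1) = m.choose t + m.choose (t + 1) :=
      Nat.choose_succ_succ m t
    simp [this]

/-- For all integers `k ≥ 0` and all `i` with `k+1 ≤ i ≤ 2k+1`,
the alternating sum `∑_{j=0}^{i-k-1} (-1)^j C(k-j, 2k+1-i)·C(2k+1, k-j)` is
nonnegative. -/
theorem stmt9 (k i : ℕ) (h1 : k + 1 ≤ i) (h2 : i ≤ 2 * k + 1) :
    0 ≤ ∑ j ∈ Finset.range (i - k),
      (-1 : ℤ) ^ j * ((k - j).choose (2 * k + 1 - i) : ℤ) *
        ((2 * k + 1).choose (k - j) : ℤ) := by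
  obtain ⟨m, rfl⟩ : ∃ m, i = m + 1 := ⟨i - 1, by omega⟩
  set t : ℕ := m - k with ht
  have hik : m + 1 - k = t + 1 := by omega
  rw [hik]
  have hterm : ∀ j ∈ Finset.range (t + 1),
      (-1 : ℤ) ^ j * ((k - j).choose (2 * k + 1 - (m + 1)) : ℤ) *
        ((2 * k + 1).choose (k - j) : ℤ)
      = ((2 * k + 1).choose (2 * k + 1 - (m + 1)) : ℤ) *
          ((-1 : ℤ) ^ j * ((m + 1).choose (t - j) : ℤ)) := by
    intro j hj
    simp only [Finset.mem_range] at hj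
    have hjt : j ≤ t := by omega
    have h3 : 2 * k + 1 - (m + 1) ≤ k - j := by omega
    have h4 : k - j ≤ 2 * k + 1 := by omega
    have key := Nat.choose_mul (n := 2 * k + 1) h3
    have e1 : 2 * k + 1 - (2 * k + 1 - (m + 1)) = m + 1 := by omega
    have e2 : k - j - (2 * k + 1 - (m + 1)) = t - j := by omega
    rw [e1, e2] at key
    have : ((2 * k + 1).choose (k - j) : ℤ) * ((k - j).choose (2 * k + 1 - (m + 1)) : ℤ)
        = ((2 * k + 1).choose (2 * k + 1 - (m + 1)) : ℤ) * ((m + 1).choose (t - j) : ℤ) := by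
      exact_mod_cast congrArg (Nat.cast : ℕ → ℤ) key
    linear_combination (-1 : ℤ) ^ j * this
  rw [Finset.sum_congr rfl hterm, ← Finset.mul_sum, aux_alt_sum]
  positivity
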